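/- arXiv:1902.02935 — 2 statements merged into one kernel-verified Lean document; each statement's English description precedes it below -/
import Mathlib

section
/- For every total rent M large enough — specifically M ≥ n·(max_{i, a, b} (V_{ib} − V_{ia}) + max_j b_j) where V_{ia} = (v_{ia} + ρ_i b_i)/(1 + ρ_i) — the envy-free set of the budget-constrained economy u coincides with the envy-free set of the economy with utilities ũ_i(p, a) = (1 + ρ_i)(V_{ia} − p), and moreover the utilities agree at every envy-free allocation: at any envy-free (t, μ) for rent M, every room price satisfies t_a ≥ max_j b_j, so u_i(t_{μ(i)}, μ(i)) = ũ_i(t_{μ(i)}, μ(i)) for all i. -/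
/-!
Writing `V_{ia} = (v_{ia} + ρ_i b_i)/(1 + ρ_i)`, the budget-constrained utility never exceeds the
quasi-linear one `ũ_i(p, a) = (1 + ρ_i)(V_{ia} - p)`, the two coincide at prices `p ≥ b_i`, and
both exceed `(1 + ρ_i)(V_{ia} - B)` at prices `p < B := max_j b_j`. Some room costs at least
`M / n ≥ V_{ic} - V_{ia} + B`; if another room `a` were cheaper than `B`, the agent holding that
expensive room would strictly prefer `a`, in either economy. Hence at every envy-free allocation
all prices are at least `B`, where the two utilities agree, so the two envy-free sets coincide.
-/

open Finset

section EnvyFree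

variable {ι : Type*}

def IsEnvyFree (u : ι → ℝ → ι → ℝ) (t : ι → ℝ) (μ : Equiv.Perm ι) : Prop :=
  ∀ i j, u i (t (μ j)) (μ j) ≤ u i (t (μ i)) (μ i)

theorem isEnvyFree_congr {u u' : ι → ℝ → ι → ℝ} {t : ι → ℝ} (μ : Equiv.Perm ι)
    (h : ∀ i a, u i (t a) a = u' i (t a) a) : IsEnvyFree u t μ ↔ IsEnvyFree u' t μ := by
  simp only [IsEnvyFree, h]

variable [Fintype ι]

theorem exists_sum_le_card_mul [Nonempty ι] (t : ι → ℝ) :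
    ∃ a, ∑ i, t i ≤ Fintype.card ι * t a := by
  obtain ⟨a, -, ha⟩ := exists_max_image univ t univ_nonempty
  exact ⟨a, by simpa using sum_le_card_nsmul univ t (t a) fun i _ ↦ ha i (mem_univ i)⟩

theorem le_price_of_isEnvyFree {u : ι → ℝ → ι → ℝ} {c : ι → ℝ} {V : ι → ι → ℝ} {B M : ℝ}
    {t : ι → ℝ} {μ : Equiv.Perm ι} (hc : ∀ i, 0 ≤ c i)
    (hu_le : ∀ i p a, u i p a ≤ c i * (V i a - p))
    (hu_gt : ∀ i p a, p < B → c i * (V i a - B) < u i p a)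
    (hM : ∀ i a s, (Fintype.card ι : ℝ) * (V i s - V i a + B) ≤ M)
    (ht : ∑ a, t a = M) (hef : IsEnvyFree u t μ) (a : ι) : B ≤ t a := by
  have : Nonempty ι := ⟨a⟩
  by_contra! hta
  obtain ⟨s, hs⟩ := exists_sum_le_card_mul t
  have hcard : (0 : ℝ) < Fintype.card ι := by exact_mod_cast Fintype.card_pos
  have hts : V (μ.symm s) s - V (μ.symm s) a + B ≤ t s :=
    le_of_mul_le_mul_left ((hM _ a s).trans (ht ▸ hs)) hcard
  have hstay := hef (μ.symm s) (μ.symm a)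
  rw [Equiv.apply_symm_apply, Equiv.apply_symm_apply] at hstay
  refine lt_irrefl (c (μ.symm s) * (V (μ.symm s) a - B)) ?_
  calc c (μ.symm s) * (V (μ.symm s) a - B) < u (μ.symm s) (t a) a := hu_gt _ _ _ hta
    _ ≤ u (μ.symm s) (t s) s := hstay
    _ ≤ c (μ.symm s) * (V (μ.symm s) s - t s) := hu_le _ _ _
    _ ≤ c (μ.symm s) * (V (μ.symm s) a - B) :=
      mul_le_mul_of_nonneg_left (by linarith) (hc _)

end EnvyFree

section BudgetUtility

variable {v b ρ p : ℝ}

theorem one_add_mul_div_sub (hρ : 0 ≤ ρ) :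
    (1 + ρ) * ((v + ρ * b) / (1 + ρ) - p) = v + ρ * b - (1 + ρ) * p := by
  have : 1 + ρ ≠ 0 := by positivity
  field_simp

theorem budget_le_quasilinear (hρ : 0 ≤ ρ) :
    v - p - ρ * max 0 (p - b) ≤ (1 + ρ) * ((v + ρ * b) / (1 + ρ) - p) := by
  rw [one_add_mul_div_sub hρ]
  nlinarith [mul_le_mul_of_nonneg_left (le_max_right 0 (p - b)) hρ]

theorem budget_eq_quasilinear (hρ : 0 ≤ ρ) (hp : b ≤ p) :
    v - p - ρ * max 0 (p - b) = (1 + ρ) * ((v + ρ * b) / (1 + ρ) - p) := by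
  rw [one_add_mul_div_sub hρ, max_eq_right (sub_nonneg.mpr hp)]
  ring

theorem quasilinear_lt_budget {B : ℝ} (hρ : 0 ≤ ρ) (hb : b ≤ B) (hp : p < B) :
    (1 + ρ) * ((v + ρ * b) / (1 + ρ) - B) < v - p - ρ * max 0 (p - b) := by
  rw [one_add_mul_div_sub hρ]
  have : max 0 (p - b) ≤ B - b := max_le (by linarith) (by linarith)
  nlinarith [mul_le_mul_of_nonneg_left this hρ]

end BudgetUtility

theorem stmt_9_general (n : ℕ) (v : Fin n → Fin n → ℝ) (b ρ : Fin n → ℝ)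
    (hρ : ∀ i, 0 ≤ ρ i)
    (u ut : Fin n → ℝ → Fin n → ℝ)
    (hu : ∀ i p a, u i p a = v i a - p - ρ i * max 0 (p - b i))
    (V : Fin n → Fin n → ℝ)
    (hV : ∀ i a, V i a = (v i a + ρ i * b i) / (1 + ρ i))
    (hut : ∀ i p a, ut i p a = (1 + ρ i) * (V i a - p))
    (M : ℝ) (hM : ∀ i a c j : Fin n, (n : ℝ) * (V i c - V i a + b j) ≤ M) :
    (∀ (t : Fin n → ℝ) (μ : Equiv.Perm (Fin n)), (∑ a, t a = M) →
      ((∀ i j : Fin n, u i (t (μ j)) (μ j) ≤ u i (t (μ i)) (μ i)) ↔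
        (∀ i j : Fin n, ut i (t (μ j)) (μ j) ≤ ut i (t (μ i)) (μ i)))) ∧
    (∀ (t : Fin n → ℝ) (μ : Equiv.Perm (Fin n)), (∑ a, t a = M) →
      (∀ i j : Fin n, u i (t (μ j)) (μ j) ≤ u i (t (μ i)) (μ i)) →
      (∀ a j : Fin n, b j ≤ t a) ∧
        ∀ i : Fin n, u i (t (μ i)) (μ i) = ut i (t (μ i)) (μ i)) := by
  have hu_eq : ∀ i p a, b i ≤ p → u i p a = ut i p a := fun i p a hp ↦ by
    rw [hu, hut, hV, budget_eq_quasilinear (hρ i) hp]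
  have hbudget : ∀ w : Fin n → ℝ → Fin n → ℝ, (∀ i p a, w i p a ≤ ut i p a) →
      (∀ i p a j, (∀ k, b k ≤ b j) → p < b j → (1 + ρ i) * (V i a - b j) < w i p a) →
      ∀ t μ, ∑ a, t a = M → IsEnvyFree w t μ → ∀ a j, b j ≤ t a := by
    intro w hw_le hw_gt t μ ht hef a j
    obtain ⟨jm, -, hjm⟩ := exists_max_image univ b ⟨j, mem_univ j⟩
    have hbjm : ∀ k, b k ≤ b jm := fun k ↦ hjm k (mem_univ k)
    refine (hbjm j).trans (le_price_of_isEnvyFree (fun i ↦ by linarith [hρ i])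
      (fun i p a ↦ hut i p a ▸ hw_le i p a) (fun i p a hp ↦ hw_gt i p a jm hbjm hp)
      (by simpa using (hM · · · jm)) ht hef a)
  have hu_prices := hbudget u
    (fun i p a ↦ by rw [hu, hut, hV]; exact budget_le_quasilinear (hρ i))
    (fun i p a j hbj hp ↦ by rw [hu, hV]; exact quasilinear_lt_budget (hρ i) (hbj i) hp)
  have hut_prices := hbudget ut (fun _ _ _ ↦ le_rfl)
    (fun i p a j _ hp ↦ by rw [hut]; nlinarith [hρ i])
  refine ⟨fun t μ ht ↦ ⟨fun hef ↦ ?_, fun hef ↦ ?_⟩, fun t μ ht hef ↦ ?_⟩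
  · exact (isEnvyFree_congr μ fun i a ↦ hu_eq i _ a (hu_prices t μ ht hef a i)).mp hef
  · exact (isEnvyFree_congr μ fun i a ↦ hu_eq i _ a (hut_prices t μ ht hef a i)).mpr hef
  · exact ⟨hu_prices t μ ht hef, fun i ↦ hu_eq i _ _ (hu_prices t μ ht hef _ i)⟩

/-- for every rent `M ≥ n·(max_{i,a,c}(V_{ic} − V_{ia}) + max_j b_j)`
(stated pointwise), the envy-free sets of the budget-constrained economy `u`
and the rescaled quasi-linear economy `ũ_i(p,a) = (1+ρ_i)(V_{ia} − p)` coincide;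
moreover at every envy-free allocation for rent `M` every price is at least
every budget and the two utilities agree at each agent's bundle. -/
theorem stmt_9 (n : ℕ) (v : Fin n → Fin n → ℝ) (b ρ : Fin n → ℝ)
    (hb : ∀ i, 0 ≤ b i) (hρ : ∀ i, 0 ≤ ρ i)
    (u ut : Fin n → ℝ → Fin n → ℝ)
    (hu : ∀ i p a, u i p a = v i a - p - ρ i * max 0 (p - b i))
    (V : Fin n → Fin n → ℝ)
    (hV : ∀ i a, V i a = (v i a + ρ i * b i) / (1 + ρ i))
    (hut : ∀ i p a, ut i p a = (1 + ρ i) * (V i a - p))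
    (M : ℝ) (hM : ∀ i a c j : Fin n, (n : ℝ) * (V i c - V i a + b j) ≤ M) :
    (∀ (t : Fin n → ℝ) (μ : Equiv.Perm (Fin n)), (∑ a, t a = M) →
      ((∀ i j : Fin n, u i (t (μ j)) (μ j) ≤ u i (t (μ i)) (μ i)) ↔
        (∀ i j : Fin n, ut i (t (μ j)) (μ j) ≤ ut i (t (μ i)) (μ i)))) ∧
    (∀ (t : Fin n → ℝ) (μ : Equiv.Perm (Fin n)), (∑ a, t a = M) →
      (∀ i j : Fin n, u i (t (μ j)) (μ j) ≤ u i (t (μ i)) (μ i)) →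
      (∀ a j : Fin n, b j ≤ t a) ∧
        ∀ i : Fin n, u i (t (μ i)) (μ i) = ut i (t (μ i)) (μ i)) :=
  stmt_9_general n v b ρ hρ u ut hu V hV hut M hM
end

section
/- Let v^ε ∈ Q^N be the quasi-linear profile where each agent i values her own room μ(i) at r_{μ(i)} + ε/(n−1) above a common reference and every other room μ(j) at r_{μ(j)} − ε/(n−1)². Then every envy-free allocation for v^ε assigns each agent i room μ(i) at a price t_{μ(i)} satisfying r_{μ(i)} − ε ≤ t_{μ(i)} ≤ r_{μ(i)} + ε/(n−1). -/
/-!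
Summing the envy-freeness inequalities of all agents against the assignment `μ` shows that an
envy-free assignment maximises total value; since every agent values her `μ`-room at the
common bound `r a + ε/(n-1)` and every other room strictly below it, `μ` is the only
maximiser. With the assignment fixed, the surpluses `d i = t (μ i) - r (μ i)` sum to zero and
differ pairwise by at most `δ = ε/(n-1) + ε/(n-1)²`; averaging over the other `n - 1` agents
gives `n |d i| ≤ (n-1) δ = n ε/(n-1)`.
-/

open Finset Equiv

variable {ι : Type*} [Fintype ι]

def EnvyFree (v : ι → ι → ℝ) (t : ι → ℝ) (σ : Perm ι) : Prop :=
  ∀ i j, v i (σ j) - t (σ j) ≤ v i (σ i) - t (σ i)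

namespace EnvyFree

variable {v : ι → ι → ℝ} {t : ι → ℝ} {σ : Perm ι}

theorem sum_le (h : EnvyFree v t σ) (τ : Perm ι) : ∑ i, v i (τ i) ≤ ∑ i, v i (σ i) := by
  have key : ∑ i, (v i (τ i) - t (τ i)) ≤ ∑ i, (v i (σ i) - t (σ i)) :=
    sum_le_sum fun i _ => by simpa using h i (σ.symm (τ i))
  rwa [sum_sub_distrib, sum_sub_distrib, Equiv.sum_comp τ t, Equiv.sum_comp σ t,
    sub_le_sub_iff_right] at key

theorem eq_of_forall_lt (h : EnvyFree v t σ) {μ : Perm ι} {w : ι → ℝ}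
    (hμ : ∀ i, v i (μ i) = w (μ i)) (hlt : ∀ i a, a ≠ μ i → v i a < w a) : σ = μ := by
  have hle : ∀ i a, v i a ≤ w a := fun i a => by
    rcases eq_or_ne a (μ i) with rfl | ha
    exacts [(hμ i).le, (hlt i a ha).le]
  have hsum : ∑ i, w (σ i) ≤ ∑ i, v i (σ i) :=
    calc ∑ i, w (σ i) = ∑ i, w (μ i) := by rw [Equiv.sum_comp σ w, Equiv.sum_comp μ w]
      _ = ∑ i, v i (μ i) := by simp only [hμ]
      _ ≤ ∑ i, v i (σ i) := h.sum_le μ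
  have heq := (sum_eq_sum_iff_of_le fun i _ => hle i (σ i)).1
    (le_antisymm (sum_le_sum fun i _ => hle i (σ i)) hsum)
  ext i
  by_contra hne
  exact (hlt i (σ i) hne).ne (heq i (mem_univ i))

end EnvyFree

theorem card_mul_le_of_sum_eq_zero {d : ι → ℝ} {δ : ℝ} (hsum : ∑ i, d i = 0)
    (h : ∀ i j, i ≠ j → d i ≤ d j + δ) (i : ι) :
    (Fintype.card ι : ℝ) * d i ≤ (Fintype.card ι - 1) * δ := by
  classical
  have hcard : ((univ.erase i).card : ℝ) = Fintype.card ι - 1 := by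
    rw [← card_univ, ← card_erase_add_one (mem_univ i)]
    push_cast
    ring
  have key : ∑ _j ∈ univ.erase i, d i ≤ ∑ j ∈ univ.erase i, (d j + δ) :=
    sum_le_sum fun j hj => h i j (ne_of_mem_erase hj).symm
  rw [sum_add_distrib, sum_erase_eq_sub (f := d) (mem_univ i), hsum, sum_const, sum_const,
    nsmul_eq_mul, nsmul_eq_mul, hcard] at key
  linarith

theorem card_mul_abs_le_of_sum_eq_zero {d : ι → ℝ} {δ : ℝ} (hsum : ∑ i, d i = 0)
    (h : ∀ i j, i ≠ j → d i ≤ d j + δ) (i : ι) :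
    (Fintype.card ι : ℝ) * |d i| ≤ (Fintype.card ι - 1) * δ := by
  have hneg : (Fintype.card ι : ℝ) * -d i ≤ (Fintype.card ι - 1) * δ :=
    card_mul_le_of_sum_eq_zero (d := fun i => -d i) (by simp [hsum])
      (fun i j hij => by linarith [h j i hij.symm]) i
  rcases abs_cases (d i) with ⟨habs, _⟩ | ⟨habs, _⟩ <;> rw [habs]
  exacts [card_mul_le_of_sum_eq_zero hsum h i, hneg]

/-- let `v^ε` be the quasi-linear profile where agent `i` values
room `μ(i)` at `r_{μ(i)} + ε/(n−1)` and every other room `μ(j)` at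
`r_{μ(j)} − ε/(n−1)²`. Then every envy-free allocation for `v^ε` (prices
summing to `∑ r`) assigns each agent `i` room `μ(i)` at a price `t_{μ(i)}` with
`r_{μ(i)} − ε ≤ t_{μ(i)} ≤ r_{μ(i)} + ε/(n−1)`. -/
theorem stmt_16 (n : ℕ) (hn : 2 ≤ n) (r : Fin n → ℝ) (μ : Equiv.Perm (Fin n))
    (ε : ℝ) (hε : 0 < ε) (ve : Fin n → Fin n → ℝ)
    (hve : ∀ i a, ve i a =
      if a = μ i then r a + ε / ((n : ℝ) - 1) else r a - ε / ((n : ℝ) - 1) ^ 2)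
    (t : Fin n → ℝ) (σ : Equiv.Perm (Fin n))
    (hsum : ∑ a, t a = ∑ a, r a)
    (hEF : ∀ i j : Fin n, ve i (σ j) - t (σ j) ≤ ve i (σ i) - t (σ i)) :
    ∀ i : Fin n, σ i = μ i ∧
      r (μ i) - ε ≤ t (μ i) ∧ t (μ i) ≤ r (μ i) + ε / ((n : ℝ) - 1) := by
  have hn1 : (1 : ℝ) ≤ n - 1 := by
    have : (2 : ℝ) ≤ n := by exact_mod_cast hn
    linarith
  set c := ε / ((n : ℝ) - 1)
  set δ := c + ε / ((n : ℝ) - 1) ^ 2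
  have hδ : ((n : ℝ) - 1) * δ = n * c := by
    have hn0 : (n : ℝ) - 1 ≠ 0 := by positivity
    simp only [δ, c]
    field_simp
    ring
  have hσ : σ = μ := EnvyFree.eq_of_forall_lt hEF (w := fun a => r a + c)
    (fun i => by simp [hve]) fun i a ha => by
      rw [hve, if_neg ha]
      linarith [show 0 < c by positivity, show 0 < ε / ((n : ℝ) - 1) ^ 2 by positivity]
  subst hσ
  set d := fun i => t (σ i) - r (σ i)
  have hd : ∑ i, d i = 0 := by
    simp only [d, sum_sub_distrib, Equiv.sum_comp σ t, Equiv.sum_comp σ r, hsum, sub_self]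
  have hdδ : ∀ i j, i ≠ j → d i ≤ d j + δ := fun i j hij => by
    have hij' := hEF i j
    rw [hve, hve, if_pos rfl, if_neg (σ.injective.ne hij.symm)] at hij'
    simp only [d, δ]
    linarith
  intro i
  have habs : |d i| ≤ c := by
    have hbound := card_mul_abs_le_of_sum_eq_zero hd hdδ i
    rw [Fintype.card_fin, hδ] at hbound
    exact le_of_mul_le_mul_left hbound (by positivity)
  have hcε : c ≤ ε := div_le_self hε.le hn1
  obtain ⟨hlo, hhi⟩ := abs_le.1 habs
  exact ⟨rfl, by linarith, by linarith⟩
end
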